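/- arXiv:1110.4921 — 3 statements merged into one kernel-verified Lean document; each statement's English description precedes it below -/
import Mathlib

section
/- Let A be a finite set and let X ⊆ A^ℤ be an irreducible sofic subshift. Then there exists an integer n₀ ≥ 0 such that for every word u ∈ L(X) there exists a word c ∈ L(X) with |c| ≤ n₀ such that the periodic configuration (uc)^∞ belongs to X. -/
/-!
Write `X = f(Y)` with `Y` of finite type, so that membership in `Y` is decided by the
`(2K+1)`-windows of a configuration, and `f` a sliding block code of some radius `r`. For an
occurrence of `u` in `f(y)`, look at the two `2K`-blocks of `y` lying just outside the
`r`-neighbourhood of the occurrence. By irreducibility some point of `X` contains many occurrences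
of `u`; lifting it to `Y`, the pigeonhole principle gives two occurrences far apart with the same
pair of blocks, so within `Y` the right block of `u` leads back to its left block. Since there are
finitely many pairs of blocks, such a path can always be chosen of length at most a uniform `C`.
Gluing it after `u` and repeating periodically stays in `Y`, and the image is `(uc)^∞` with
`|c| ≤ 2r + 2K + C`.
-/

/-- The shift action of `ℤ` on configurations `x : ℤ → A`: `(n • x)(m) = x(m - n)`. -/
def shiftZ {A : Type*} (n : ℤ) (x : ℤ → A) : ℤ → A :=
  fun m => x (m - n)

/-- A subshift is a closed, shift-invariant subset of `A^ℤ` (with the prodiscrete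
topology). -/
def IsSubshiftZ {A : Type*} [TopologicalSpace A] (X : Set (ℤ → A)) : Prop :=
  IsClosed X ∧ ∀ (n : ℤ) (x : ℤ → A), x ∈ X → shiftZ n x ∈ X

/-- A configuration is periodic if its orbit under the shift action is finite. -/
def IsPeriodicZ {A : Type*} (x : ℤ → A) : Prop :=
  (Set.range fun n : ℤ => shiftZ n x).Finite

/-- A subshift `X ⊆ A^ℤ` is strongly irreducible if there is a finite `Δ ⊆ ℤ` such
that whenever `Ω₁, Ω₂` are finite subsets of `ℤ` with `(Ω₁ - Δ) ∩ Ω₂ = ∅`, any two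
configurations of `X` can be glued along `Ω₁` and `Ω₂` inside `X`. -/
def IsStronglyIrreducibleZ {A : Type*} (X : Set (ℤ → A)) : Prop :=
  ∃ Δ : Finset ℤ, ∀ Ω₁ Ω₂ : Finset ℤ,
    (∀ a ∈ Ω₁, ∀ d ∈ Δ, a - d ∉ Ω₂) →
    ∀ x₁ ∈ X, ∀ x₂ ∈ X, ∃ x ∈ X,
      (∀ i ∈ Ω₁, x i = x₁ i) ∧ (∀ i ∈ Ω₂, x i = x₂ i)

/-- The word `w` appears as a subword of the configuration `x : ℤ → A`. -/
def AppearsIn {A : Type*} (w : List A) (x : ℤ → A) : Prop :=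
  ∃ i : ℤ, ∀ k : Fin w.length, x (i + (k.1 : ℤ)) = w.get k

/-- The language of `X ⊆ A^ℤ`: all finite words appearing in configurations of `X`. -/
def lang {A : Type*} (X : Set (ℤ → A)) : Set (List A) :=
  {w : List A | ∃ x ∈ X, AppearsIn w x}

/-- `X ⊆ A^ℤ` is irreducible if any two words of its language can be joined,
within the language, by some word. -/
def IrreducibleZ {A : Type*} (X : Set (ℤ → A)) : Prop :=
  ∀ u ∈ lang X, ∀ v ∈ lang X, ∃ w : List A, u ++ w ++ v ∈ lang X

/-- `X ⊆ A^ℤ` is a W-subshift if there is `n₀ ≥ 0` such that any two words of its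
language can be joined, within the language, by a word of length at most `n₀`. -/
def IsWSubshift {A : Type*} (X : Set (ℤ → A)) : Prop :=
  ∃ n₀ : ℕ, ∀ u ∈ lang X, ∀ v ∈ lang X,
    ∃ c ∈ lang X, c.length ≤ n₀ ∧ u ++ c ++ v ∈ lang X

/-- A subshift of `A^ℤ` is of finite type if it is defined by a finite window `Ω` and
a set of allowed patterns `P ⊆ A^Ω`. -/
def IsOfFiniteTypeZ {A : Type*} (X : Set (ℤ → A)) : Prop :=
  ∃ (Ω : Finset ℤ) (P : Set ({i : ℤ // i ∈ Ω} → A)),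
    X = {x : ℤ → A | ∀ n : ℤ, (fun w : {i : ℤ // i ∈ Ω} => shiftZ n x w.1) ∈ P}

/-- A subshift `X ⊆ A^ℤ` is sofic if it is the image of a subshift of finite type
`Y ⊆ B^ℤ` (over a finite alphabet `B`, with its prodiscrete topology) under a
surjective continuous shift-equivariant map. -/
def IsSoficZ {A : Type*} [TopologicalSpace A] (X : Set (ℤ → A)) : Prop :=
  ∃ (B : Type) (_ : Finite B) (Y : Set (ℤ → B)) (f : (ℤ → B) → (ℤ → A)),
    letI : TopologicalSpace B := ⊥
    IsSubshiftZ Y ∧ IsOfFiniteTypeZ Y ∧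
      ContinuousOn f Y ∧ (∀ (n : ℤ), ∀ y ∈ Y, f (shiftZ n y) = shiftZ n (f y)) ∧
      f '' Y = X

/-- The periodic configuration `w^∞ ∈ A^ℤ` obtained by repeating a nonempty word `w`
bi-infinitely. -/
def perConfig {A : Type*} (w : List A) (hw : w ≠ []) : ℤ → A := fun i =>
  w.get ⟨(i % (w.length : ℤ)).toNat, by
    have h0 : 0 < w.length := by
      cases w with
      | nil => exact absurd rfl hw
      | cons _ _ => simp
    have h1 : 0 ≤ i % (w.length : ℤ) :=
      Int.emod_nonneg _ (by exact_mod_cast h0.ne')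
    have h2 : i % (w.length : ℤ) < (w.length : ℤ) :=
      Int.emod_lt_of_pos _ (by exact_mod_cast h0)
    omega⟩

open Set Function

section

variable {A B : Type*}

section Blocks

def block (x : ℤ → A) (i : ℤ) (n : ℕ) : Fin n → A := fun k => x (i + k)

theorem block_shiftZ (x : ℤ → A) (n i : ℤ) (m : ℕ) :
    block (shiftZ n x) i m = block x (i - n) m := by
  funext k
  simp only [block, shiftZ]
  ring_nf

theorem apply_eq_of_block_eq {x y : ℤ → A} {i j : ℤ} {m : ℕ} (h : block x i m = block y j m)
    {k : ℤ} (hk₀ : 0 ≤ k) (hk : k < m) : x (i + k) = y (j + k) := by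
  simpa [block, Int.toNat_of_nonneg hk₀] using congrFun h ⟨k.toNat, by omega⟩

theorem appearsIn_iff {w : List A} {x : ℤ → A} :
    AppearsIn w x ↔ ∃ i, List.ofFn (block x i w.length) = w :=
  exists_congr fun _ => ⟨fun h => (congrArg List.ofFn (funext h)).trans (List.ofFn_get w),
    fun h => congrFun (List.ofFn_inj.mp (h.trans (List.ofFn_get w).symm))⟩

theorem ofFn_block_mem_lang {X : Set (ℤ → A)} {x : ℤ → A} (hx : x ∈ X) (i : ℤ) (n : ℕ) :
    List.ofFn (block x i n) ∈ lang X :=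
  ⟨x, hx, appearsIn_iff.2 ⟨i, List.ext_getElem (by simp) fun _ _ _ => by simp [block]⟩⟩

theorem ofFn_block_add (x : ℤ → A) (i : ℤ) (m n : ℕ) :
    List.ofFn (block x i (m + n)) = List.ofFn (block x i m) ++ List.ofFn (block x (i + m) n) := by
  rw [List.ofFn_add]
  congr 2
  funext k
  simp [block, add_assoc]

theorem ofFn_block_eq_of_isPrefix_drop {x : ℤ → A} {i : ℤ} {n p : ℕ} {u : List A}
    (h : u <+: (List.ofFn (block x i n)).drop p) : List.ofFn (block x (i + p) u.length) = u := by
  refine List.ext_getElem (by simp) fun k hk hk' => ?_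
  rw [h.getElem hk', List.getElem_drop, List.getElem_ofFn, List.getElem_ofFn]
  simp only [block]
  push_cast
  ring_nf

theorem perConfig_ofFn_block {x : ℤ → A} {n : ℕ} (hx : Periodic x n)
    (h : List.ofFn (block x 0 n) ≠ []) : perConfig (List.ofFn (block x 0 n)) h = x := by
  have hn : n ≠ 0 := fun hn => h (List.ofFn_eq_nil_iff.2 hn)
  funext i
  simp only [perConfig, List.get_eq_getElem, List.getElem_ofFn, block, zero_add, List.length_ofFn]
  rw [Int.toNat_of_nonneg (Int.emod_nonneg _ (by omega)), Int.emod_def, mul_comm]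
  exact (hx.int_mul _).sub_eq i

theorem mem_lang_of_perConfig_mem {X : Set (ℤ → A)} {w : List A} {h : w ≠ []}
    (hw : perConfig w h ∈ X) : w ∈ lang X := by
  refine ⟨_, hw, 0, fun k => ?_⟩
  have hk : (k : ℤ) < w.length := by exact_mod_cast k.2
  simp [perConfig, Int.emod_eq_of_lt (Int.natCast_nonneg _) hk]

end Blocks

section Completion

def HasPeriodicCompletion (X : Set (ℤ → A)) (n : ℕ) (u : List A) : Prop :=
  ∃ c ∈ lang X, c.length ≤ n ∧ ∃ h : u ++ c ≠ [], perConfig (u ++ c) h ∈ X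

theorem HasPeriodicCompletion.mono {X : Set (ℤ → A)} {n m : ℕ} {u : List A}
    (h : HasPeriodicCompletion X n u) (hnm : n ≤ m) : HasPeriodicCompletion X m u :=
  let ⟨c, hc, hcn, hne, hmem⟩ := h
  ⟨c, hc, hcn.trans hnm, hne, hmem⟩

theorem hasPeriodicCompletion_of_periodic {X : Set (ℤ → A)} {x : ℤ → A} (hx : x ∈ X) {L : ℕ}
    (hL : 0 < L) (hper : Periodic x L) {u : List A} (hu : List.ofFn (block x 0 u.length) = u)
    (huL : u.length ≤ L) : HasPeriodicCompletion X (L - u.length) u := by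
  have hsplit : u ++ List.ofFn (block x u.length (L - u.length)) = List.ofFn (block x 0 L) := by
    have := ofFn_block_add x 0 u.length (L - u.length)
    rwa [Nat.add_sub_cancel' huL, hu, zero_add, eq_comm] at this
  refine ⟨List.ofFn (block x u.length (L - u.length)), ofFn_block_mem_lang hx _ _, by simp, ?_⟩
  rw [hsplit]
  have hne : List.ofFn (block x 0 L) ≠ [] := by simpa using hL.ne'
  exact ⟨hne, (perConfig_ofFn_block hper hne).symm ▸ hx⟩

/-- The empty word is completed through a one-letter word. -/
theorem hasPeriodicCompletion_nil {X : Set (ℤ → A)} {n : ℕ} (hX : X.Nonempty)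
    (h : ∀ u ∈ lang X, u ≠ [] → HasPeriodicCompletion X n u) :
    HasPeriodicCompletion X (n + 1) [] := by
  obtain ⟨x, hx⟩ := hX
  obtain ⟨c, hc, hcn, hne, hmem⟩ := h (List.ofFn (block x 0 1)) (ofFn_block_mem_lang hx 0 1)
    (by simp)
  refine ⟨_, mem_lang_of_perConfig_mem hmem, by simpa using hcn, ?_⟩
  simp only [List.nil_append]
  exact ⟨hne, hmem⟩

end Completion

section Combinatorics

theorem Finset.exists_add_le_map_eq_of_mul_lt_card {Q : Type*} [Fintype Q] (f : ℕ → Q)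
    {S : Finset ℕ} {D : ℕ} (hS : Fintype.card Q * D < S.card) :
    ∃ a ∈ S, ∃ b ∈ S, a + D ≤ b ∧ f a = f b := by
  classical
  obtain ⟨q, -, hq⟩ := Finset.exists_lt_card_fiber_of_mul_lt_card_of_maps_to
    (t := Finset.univ) (fun a _ => Finset.mem_univ (f a)) (by rwa [Finset.card_univ])
  set F := S.filter (f · = q)
  have hF : F.Nonempty := Finset.card_pos.1 (by omega)
  have hFcard : F.card ≤ F.max' hF + 1 - F.min' hF := by
    rw [← Nat.card_Icc]
    exact Finset.card_le_card fun a ha => Finset.mem_Icc.2 ⟨F.min'_le a ha, F.le_max' a ha⟩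
  have ha := Finset.mem_filter.1 (F.min'_mem hF)
  have hb := Finset.mem_filter.1 (F.max'_mem hF)
  exact ⟨_, ha.1, _, hb.1, by omega, ha.2.trans hb.2.symm⟩

theorem exists_uniform_bound_of_finite {ι : Type*} [Finite ι] (p : ι → ℕ → Prop) :
    ∃ C, ∀ i, (∃ n, p i n) → ∃ n ≤ C, p i n := by
  classical
  obtain ⟨C, hC⟩ := Finite.exists_le fun i => if h : ∃ n, p i n then Nat.find h else 0
  exact ⟨C, fun i hi => ⟨Nat.find hi, by simpa [hi] using hC i, Nat.find_spec hi⟩⟩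

end Combinatorics

section SlidingBlockCodes

def HasRadiusOn (f : (ℤ → B) → ℤ → A) (Y : Set (ℤ → B)) (r : ℕ) : Prop :=
  ∀ y ∈ Y, ∀ z ∈ Y, ∀ j : ℤ, EqOn y z (Icc (j - r) (j + r)) → f y j = f z j

variable [TopologicalSpace A] [DiscreteTopology A] [TopologicalSpace B] [DiscreteTopology B]

theorem IsCompact.exists_finset_eqOn_imp_eq {ι : Type*} {Y : Set (ι → B)} (hY : IsCompact Y)
    {g : (ι → B) → A} (hg : ContinuousOn g Y) :
    ∃ I : Finset ι, ∀ y ∈ Y, ∀ z ∈ Y, EqOn y z I → g y = g z := by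
  have hlocal : ∀ y ∈ Y, ∃ I : Finset ι, ∀ z ∈ Y, EqOn z y I → g z = g y := by
    intro y hy
    obtain ⟨U, hU, hUY⟩ := mem_nhdsWithin_iff_exists_mem_nhds_inter.1
      (hg y hy ((isOpen_discrete {g y}).mem_nhds rfl))
    rw [nhds_pi, Filter.mem_pi'] at hU
    obtain ⟨I, t, ht, hIt⟩ := hU
    exact ⟨I, fun z hz hzy => hUY ⟨hIt fun i hi => hzy hi ▸ mem_of_mem_nhds (ht i), hz⟩⟩
  choose! I hI using hlocal
  classical
  obtain ⟨t, htY, hcover⟩ := hY.elim_nhds_subcover (fun y => {z | EqOn z y (I y)}) fun y _ =>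
    (isOpen_set_pi (I y).finite_toSet fun i _ => isOpen_discrete {y i}).mem_nhds fun _ _ => rfl
  refine ⟨t.biUnion I, fun y hy z hz hyz => ?_⟩
  obtain ⟨y₀, hy₀, hyy₀⟩ := mem_iUnion₂.1 (hcover hy)
  have hI₀ : ∀ ⦃i⦄, i ∈ I y₀ → i ∈ t.biUnion I := fun _ hi => Finset.subset_biUnion_of_mem I hy₀ hi
  rw [hI y₀ (htY y₀ hy₀) y hy hyy₀,
    hI y₀ (htY y₀ hy₀) z hz fun i hi => (hyz (hI₀ hi)).symm.trans (hyy₀ hi)]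

theorem exists_hasRadiusOn {Y : Set (ℤ → B)} (hY : IsCompact Y)
    (hshift : ∀ (n : ℤ) (y : ℤ → B), y ∈ Y → shiftZ n y ∈ Y) {f : (ℤ → B) → ℤ → A}
    (hf : ContinuousOn f Y) (hfeq : ∀ (n : ℤ), ∀ y ∈ Y, f (shiftZ n y) = shiftZ n (f y)) :
    ∃ r, HasRadiusOn f Y r := by
  obtain ⟨I, hI⟩ := hY.exists_finset_eqOn_imp_eq ((continuous_apply 0).comp_continuousOn hf)
  refine ⟨I.sup Int.natAbs, fun y hy z hz j hyz => ?_⟩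
  have hrecenter : ∀ w ∈ Y, f w j = f (shiftZ (-j) w) 0 := fun w hw => by
    simp [hfeq _ _ hw, shiftZ]
  rw [hrecenter y hy, hrecenter z hz]
  refine hI _ (hshift _ _ hy) _ (hshift _ _ hz) fun i hi => hyz ?_
  have := Finset.le_sup (f := Int.natAbs) hi
  simp only [mem_Icc]
  omega

end SlidingBlockCodes

section FiniteType

def IsLocallyDetermined (Y : Set (ℤ → B)) (K : ℕ) : Prop :=
  ∀ x : ℤ → B, (∀ n : ℤ, ∃ y ∈ Y, EqOn x y (Icc (n - K) (n + K))) → x ∈ Y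

theorem IsOfFiniteTypeZ.exists_isLocallyDetermined {Y : Set (ℤ → B)} (hY : IsOfFiniteTypeZ Y) :
    ∃ K, IsLocallyDetermined Y K := by
  obtain ⟨Ω, P, rfl⟩ := hY
  refine ⟨Ω.sup Int.natAbs, fun x hx n => ?_⟩
  obtain ⟨y, hy, hxy⟩ := hx (-n)
  convert hy n using 1
  funext w
  have := Finset.le_sup (f := Int.natAbs) w.2
  exact hxy (by simp only [mem_Icc]; omega)

variable {Y : Set (ℤ → B)} {K : ℕ}

theorem IsLocallyDetermined.ite_mem (hY : IsLocallyDetermined Y K) {y z : ℤ → B} (hy : y ∈ Y)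
    (hz : z ∈ Y) {s : ℤ} (hyz : EqOn y z (Ico s (s + 2 * K))) :
    (fun i => if i < s then y i else z i) ∈ Y := by
  refine hY _ fun n => ?_
  rcases lt_or_ge n (s + K) with hn | hn
  · refine ⟨y, hy, fun i ⟨hi₁, hi₂⟩ => ?_⟩
    dsimp only
    split_ifs with his
    · rfl
    · exact (hyz ⟨not_lt.1 his, by omega⟩).symm
  · refine ⟨z, hz, fun i ⟨hi₁, hi₂⟩ => ?_⟩
    exact if_neg (by omega)

theorem IsLocallyDetermined.mem_of_periodic (hY : IsLocallyDetermined Y K)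
    (hshift : ∀ (n : ℤ) (y : ℤ → B), y ∈ Y → shiftZ n y ∈ Y) {x y : ℤ → B} {a L : ℤ}
    (hL : 0 < L) (hx : Periodic x L) (hy : y ∈ Y) (hxy : EqOn x y (Ico a (a + L + 2 * K))) :
    x ∈ Y := by
  refine hY _ fun n => ⟨shiftZ ((n - K - a) / L * L) y, hshift _ _ hy, fun i hi => ?_⟩
  have hdiv := Int.emod_add_mul_ediv (n - K - a) L
  have h₀ := Int.emod_nonneg (n - K - a) hL.ne'
  have h₁ := Int.emod_lt_of_pos (n - K - a) hL
  simp only [mem_Icc] at hi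
  rw [← (hx.int_mul ((n - K - a) / L)).sub_eq i]
  exact hxy ⟨by push_cast; linarith, by push_cast; linarith⟩

/-- Glue `y` and `z` along their common block at `s`, then repeat the stretch `[a, a + L)`;
the block of `z` at `a + L` matching that of `y` at `a` makes the seam legal. -/
theorem IsLocallyDetermined.exists_periodic_eqOn (hY : IsLocallyDetermined Y K)
    (hshift : ∀ (n : ℤ) (y : ℤ → B), y ∈ Y → shiftZ n y ∈ Y) {y z : ℤ → B} (hy : y ∈ Y)
    (hz : z ∈ Y) {a s L : ℤ} (hL : 0 < L) (has : a + 2 * K ≤ s) (hsL : s ≤ a + L)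
    (hyz : block y s (2 * K) = block z s (2 * K))
    (hzy : block z (a + L) (2 * K) = block y a (2 * K)) :
    ∃ x ∈ Y, Periodic x L ∧ EqOn x y (Ico a s) := by
  set w : ℤ → B := fun i => if i < s then y i else z i
  have hw : w ∈ Y := hY.ite_mem hy hz fun i ⟨hi₁, hi₂⟩ => by
    simpa using apply_eq_of_block_eq hyz (k := i - s) (by omega) (by omega)
  have hwy : ∀ i < s, w i = y i := fun i hi => if_pos hi
  have hwz : ∀ i, s ≤ i → w i = z i := fun i hi => if_neg (not_lt.2 hi)
  have hmod : ∀ i ∈ Ico a (a + L), toIcoMod hL a i = i := fun i hi => (toIcoMod_eq_self hL).2 hi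
  have hwper : EqOn (w ∘ toIcoMod hL a) w (Ico a (a + L + 2 * K)) := by
    intro i ⟨hai, hiK⟩
    rcases lt_or_ge i (a + L) with hiL | hiL
    · simp [hmod i ⟨hai, hiL⟩]
    · have hi : toIcoMod hL a i = i - L := by
        have := toIcoMod_add_right hL a (i - L)
        rw [sub_add_cancel] at this
        exact this.trans (hmod _ ⟨by linarith, by linarith⟩)
      have := apply_eq_of_block_eq hzy (k := i - L - a) (by linarith) (by omega)
      simp only [comp_apply, hi, hwy _ (by linarith : i - L < s), hwz _ (by linarith : s ≤ i)]
      convert this.symm using 2 <;> ring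
  have hper : Periodic (w ∘ toIcoMod hL a) L := fun i => congrArg w (toIcoMod_add_right hL a i)
  refine ⟨w ∘ toIcoMod hL a, hY.mem_of_periodic hshift hL hper hw hwper, hper, fun i hi => ?_⟩
  rw [comp_apply, hmod i ⟨hi.1, by linarith [hi.2]⟩, hwy i hi.2]

end FiniteType

theorem IrreducibleZ.exists_mem_lang_card_occurrences {X : Set (ℤ → A)} (hX : IrreducibleZ X)
    {u : List A} (hu : u ∈ lang X) (hu₀ : u ≠ []) (N : ℕ) :
    ∃ W ∈ lang X, ∃ S : Finset ℕ, S.card = N ∧ ∀ p ∈ S, u <+: W.drop p := by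
  classical
  induction N with
  | zero => exact ⟨u, hu, ∅, rfl, by simp⟩
  | succ N ih =>
    obtain ⟨W, hW, S, hS, hocc⟩ := ih
    obtain ⟨w, hw⟩ := hX W hW u hu
    have hlt : ∀ p ∈ S, p < W.length := fun p hp => by
      have := (hocc p hp).length_le
      have := List.length_pos_of_ne_nil hu₀
      simp only [List.length_drop] at *
      omega
    refine ⟨W ++ w ++ u, hw, insert (W ++ w).length S, ?_, ?_⟩
    · rw [Finset.card_insert_of_notMem fun h => (hlt _ h).not_ge (by simp), hS]
    · simp only [Finset.forall_mem_insert, List.drop_left]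
      refine ⟨List.prefix_refl u, fun p hp => ?_⟩
      rw [List.append_assoc, List.drop_append_of_le_length (hlt p hp).le]
      exact (hocc p hp).trans (List.prefix_append _ _)

section SoficCovers

variable {Y : Set (ℤ → B)} {f : (ℤ → B) → ℤ → A}

theorem Function.Periodic.map_of_shiftZ_equivariant
    (hfeq : ∀ (n : ℤ), ∀ y ∈ Y, f (shiftZ n y) = shiftZ n (f y)) {x : ℤ → B} (hx : x ∈ Y)
    {L : ℤ} (hper : Periodic x L) : Periodic (f x) L := fun i => by
  have hfix : shiftZ (-L) x = x := funext fun j => by simp [shiftZ, hper j]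
  simpa [shiftZ, hfix] using (congrFun (hfeq (-L) x hx) i).symm

/-- Among many occurrences of `u` in a lift to `Y`, two far apart have the same pair of
`m`-blocks at distance `r` around them; the stretch between them leads, in `Y`, from the right
block back to the left one. -/
theorem exists_block_path_of_mem_lang [Finite B]
    (hshift : ∀ (n : ℤ) (y : ℤ → B), y ∈ Y → shiftZ n y ∈ Y)
    (hfeq : ∀ (n : ℤ), ∀ y ∈ Y, f (shiftZ n y) = shiftZ n (f y)) (hirr : IrreducibleZ (f '' Y))
    (r m : ℕ) {u : List A} (hu : u ∈ lang (f '' Y)) (hu₀ : u ≠ []) :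
    ∃ y ∈ Y, List.ofFn (block (f y) 0 u.length) = u ∧ ∃ t : ℕ, ∃ z ∈ Y,
      block z 0 m = block y (u.length + r) m ∧ block z t m = block y (-r - m) m := by
  have := Fintype.ofFinite B
  set n := u.length
  obtain ⟨W, ⟨_, ⟨y₀, hy₀, rfl⟩, hW⟩, S, hS, hocc⟩ := hirr.exists_mem_lang_card_occurrences hu hu₀
    (Fintype.card ((Fin m → B) × (Fin m → B)) * (n + 2 * r + m) + 1)
  obtain ⟨i, hi⟩ := appearsIn_iff.1 hW
  obtain ⟨a, ha, b, hb, hab, hstate⟩ := Finset.exists_add_le_map_eq_of_mul_lt_card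
    (fun p : ℕ => (block y₀ (i + p - r - m) m, block y₀ (i + p + n + r) m)) (D := n + 2 * r + m)
    (by rw [hS]; exact Nat.lt_succ_self _)
  have hua : List.ofFn (block (f y₀) (i + a) n) = u := by
    have := hocc a ha
    rw [← hi] at this
    exact ofFn_block_eq_of_isPrefix_drop this
  refine ⟨shiftZ (-(i + a)) y₀, hshift _ _ hy₀, ?_, b - a - (n + 2 * r + m),
    shiftZ (-(i + a + n + r)) y₀, hshift _ _ hy₀, ?_, ?_⟩
  · rw [hfeq _ _ hy₀, block_shiftZ, zero_sub, neg_neg, hua]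
  · simp only [block_shiftZ]
    ring_nf
  · simp only [block_shiftZ]
    convert (Prod.ext_iff.1 hstate).1.symm using 2
    · omega
    · ring

theorem hasPeriodicCompletion_of_block_path {K r : ℕ} (hY : IsLocallyDetermined Y K)
    (hshift : ∀ (n : ℤ) (y : ℤ → B), y ∈ Y → shiftZ n y ∈ Y) (hf : HasRadiusOn f Y r)
    (hfeq : ∀ (n : ℤ), ∀ y ∈ Y, f (shiftZ n y) = shiftZ n (f y)) {y z : ℤ → B} (hy : y ∈ Y)
    (hz : z ∈ Y) {u : List A} (hu₀ : u ≠ []) (hu : List.ofFn (block (f y) 0 u.length) = u)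
    {t : ℕ} (hβ : block z 0 (2 * K) = block y (u.length + r) (2 * K))
    (hα : block z t (2 * K) = block y (-r - (2 * K : ℕ)) (2 * K)) :
    HasPeriodicCompletion (f '' Y) (2 * r + 2 * K + t) u := by
  set n := u.length
  have hn : 0 < n := List.length_pos_of_ne_nil hu₀
  obtain ⟨x, hx, hper, hxy⟩ := hY.exists_periodic_eqOn hshift hy (hshift (n + r) z hz)
    (a := -r - (2 * K : ℕ)) (s := n + r) (L := (n + 2 * r + 2 * K + t : ℕ)) (by omega) (by omega)
    (by omega) (by rw [block_shiftZ, sub_self, hβ]) (by rw [block_shiftZ, ← hα]; push_cast; ring_nf)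
  have hxu : List.ofFn (block (f x) 0 n) = u := by
    rw [← hu]
    congr 1
    funext k
    exact hf x hx y hy _ fun i ⟨hi₁, hi₂⟩ => hxy ⟨by omega, by omega⟩
  exact (hasPeriodicCompletion_of_periodic (mem_image_of_mem f hx) (by omega)
    (hper.map_of_shiftZ_equivariant hfeq hx) hxu (by omega)).mono (by omega)

end SoficCovers

end

theorem irreducible_sofic_periodic_completion_general
    {A : Type*} [TopologicalSpace A] [DiscreteTopology A]
    (X : Set (ℤ → A)) (hirr : IrreducibleZ X)
    (hsofic : IsSoficZ X) :
    ∃ n₀ : ℕ, ∀ u ∈ lang X, ∃ c ∈ lang X, c.length ≤ n₀ ∧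
      ∃ h : u ++ c ≠ [], perConfig (u ++ c) h ∈ X := by
  obtain ⟨B, hB, Y, f, hY, hYft, hfc, hfeq, rfl⟩ := hsofic
  let : TopologicalSpace B := ⊥
  have : DiscreteTopology B := ⟨rfl⟩
  obtain ⟨K, hK⟩ := hYft.exists_isLocallyDetermined
  obtain ⟨r, hr⟩ := exists_hasRadiusOn hY.1.isCompact hY.2 hfc hfeq
  obtain ⟨C, hC⟩ := exists_uniform_bound_of_finite fun (q : (Fin (2 * K) → B) × (Fin (2 * K) → B))
    (t : ℕ) => ∃ z ∈ Y, block z 0 (2 * K) = q.1 ∧ block z t (2 * K) = q.2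
  have hne : ∀ u ∈ lang (f '' Y), u ≠ [] →
      HasPeriodicCompletion (f '' Y) (2 * r + 2 * K + C) u := by
    intro u hu hu₀
    obtain ⟨y, hy, hyu, t, hpath⟩ := exists_block_path_of_mem_lang hY.2 hfeq hirr r (2 * K) hu hu₀
    obtain ⟨t', ht', z, hz, hβ, hα⟩ := hC (_, _) ⟨t, hpath⟩
    exact (hasPeriodicCompletion_of_block_path hK hY.2 hr hfeq hy hz hu₀ hyu hβ hα).mono
      (by omega)
  refine ⟨2 * r + 2 * K + C + 1, fun u hu => ?_⟩
  rcases eq_or_ne u [] with rfl | hu₀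
  · obtain ⟨x, hx, -⟩ := hu
    exact hasPeriodicCompletion_nil ⟨x, hx⟩ hne
  · exact (hne u hu hu₀).mono (Nat.le_succ _)

/-- If `X ⊆ A^ℤ` is an irreducible sofic subshift, then there is an integer `n₀ ≥ 0`
such that every word `u ∈ L(X)` can be completed, by a word `c ∈ L(X)` of length at
most `n₀`, to a (nonempty) word `uc` whose bi-infinite periodic repetition `(uc)^∞`
belongs to `X`. -/
theorem irreducible_sofic_periodic_completion
    {A : Type*} [Finite A] [TopologicalSpace A] [DiscreteTopology A]
    (X : Set (ℤ → A)) (hX : IsSubshiftZ X) (hirr : IrreducibleZ X)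
    (hsofic : IsSoficZ X) :
    ∃ n₀ : ℕ, ∀ u ∈ lang X, ∃ c ∈ lang X, c.length ≤ n₀ ∧
      ∃ h : u ++ c ≠ [], perConfig (u ++ c) h ∈ X :=
  irreducible_sofic_periodic_completion_general X hirr hsofic
end

section
/- Let A be a finite set. Every strongly irreducible subshift X ⊆ A^ℤ is a W-subshift. -/
/-!
Glue a configuration containing `u` and one containing `v`, shifted so that `u` sits on
`[0, |u|)` and `v` on `[|u| + N, |u| + N + |v|)`, where `N` bounds `|d|` for `d ∈ Δ`.
The two windows are then `Δ`-separated, so strong irreducibility yields `x ∈ X` showing `u`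
at `0` and `v` at `|u| + N`; the connecting word `c` is whatever `x` shows on the gap.
-/

section Words

variable {A : Type*}

/-- `AppearsIn w x` is `∃ i, OccursAt w x i`. -/
def OccursAt (w : List A) (x : ℤ → A) (i : ℤ) : Prop :=
  ∀ k : Fin w.length, x (i + (k.1 : ℤ)) = w.get k

theorem occursAt_ofFn (x : ℤ → A) (i : ℤ) (n : ℕ) :
    OccursAt (List.ofFn fun k : Fin n => x (i + k)) x i := by
  intro k
  simp

theorem OccursAt.append {u v : List A} {x : ℤ → A} {i : ℤ} (hu : OccursAt u x i)
    (hv : OccursAt v x (i + u.length)) : OccursAt (u ++ v) x i := by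
  rintro ⟨k, hk⟩
  simp only [List.get_eq_getElem, List.getElem_append]
  split_ifs with hku
  · exact hu ⟨k, hku⟩
  · have hkv : k - u.length < v.length := by simp at hk; omega
    have := hv ⟨k - u.length, hkv⟩
    simp only [List.get_eq_getElem] at this
    rw [← this]
    congr 1
    push_cast [Nat.cast_sub (not_lt.mp hku)]
    ring

theorem OccursAt.shiftZ {w : List A} {x : ℤ → A} {i : ℤ} (h : OccursAt w x i) (j : ℤ) :
    OccursAt w (shiftZ (j - i) x) j := by
  intro k
  rw [← h k]
  simp only [_root_.shiftZ]
  congr 1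
  ring

theorem OccursAt.congr {w : List A} {x y : ℤ → A} {i : ℤ} (h : OccursAt w x i)
    (hxy : ∀ m ∈ Finset.Ico i (i + w.length), y m = x m) : OccursAt w y i := by
  intro k
  rw [hxy _ (by simp)]
  exact h k

end Words

theorem IsStronglyIrreducibleZ.exists_gap {A : Type*} {X : Set (ℤ → A)}
    (h : IsStronglyIrreducibleZ X) :
    ∃ N : ℕ, ∀ a b c d : ℤ, b + N ≤ c → ∀ x₁ ∈ X, ∀ x₂ ∈ X, ∃ x ∈ X,
      (∀ i ∈ Finset.Ico a b, x i = x₁ i) ∧ (∀ i ∈ Finset.Ico c d, x i = x₂ i) := by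
  obtain ⟨Δ, hΔ⟩ := h
  refine ⟨Δ.sup Int.natAbs, fun a b c d hbc => hΔ _ _ ?_⟩
  intro m hm e he
  have heN : e.natAbs ≤ Δ.sup Int.natAbs := Finset.le_sup he
  simp only [Finset.mem_Ico] at hm ⊢
  omega

theorem strongly_irreducible_is_W_general
    {A : Type*} [TopologicalSpace A]
    (X : Set (ℤ → A)) (hX : IsSubshiftZ X) (hsi : IsStronglyIrreducibleZ X) :
    IsWSubshift X := by
  obtain ⟨N, hglue⟩ := hsi.exists_gap
  refine ⟨N, ?_⟩
  rintro u ⟨x₁, hx₁, i₁, hu⟩ v ⟨x₂, hx₂, i₂, hv⟩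
  set p : ℤ := u.length + N
  obtain ⟨x, hx, hxu, hxv⟩ := hglue 0 u.length p (p + v.length) le_rfl
    _ (hX.2 _ _ hx₁) _ (hX.2 _ _ hx₂)
  have hu' : OccursAt u x 0 := (OccursAt.shiftZ hu 0).congr (by simpa using hxu)
  have hv' : OccursAt v x p := (OccursAt.shiftZ hv p).congr hxv
  let c := List.ofFn fun k : Fin N => x (u.length + k)
  have hc : OccursAt c x u.length := occursAt_ofFn x _ N
  refine ⟨c, ⟨x, hx, _, hc⟩, by simp [c], x, hx, 0, ?_⟩
  have hlen : (0 : ℤ) + (u ++ c).length = p := by simp [c, p]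
  exact (hu'.append (by rwa [zero_add])).append (hlen ▸ hv')

/-- Every strongly irreducible subshift `X ⊆ A^ℤ` is a W-subshift. -/
theorem strongly_irreducible_is_W
    {A : Type*} [Finite A] [TopologicalSpace A] [DiscreteTopology A]
    (X : Set (ℤ → A)) (hX : IsSubshiftZ X) (hsi : IsStronglyIrreducibleZ X) :
    IsWSubshift X :=
  strongly_irreducible_is_W_general X hX hsi
end

section
/- Let A be a finite set and let X ⊆ A^ℤ be a W-subshift. Then the set of periodic configurations in X is dense in X; equivalently, every word w ∈ L(X) appears as a subword of some periodic configuration belonging to X. -/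
/-!
Call `c` a bridge of a word `u` if `|c| ≤ n₀` and `u c u` is in the language; by the
W-property every word of the language has one, and there are only finitely many. Given a
bridge `c` of `u`, either every word `u (c u)^k` is in the language, and then the periodic
configuration `(u c)^∞` lies in `X` because `X` is closed and shift-invariant; or, for the
largest `k` with `v = u (c u)^k` in the language, every bridge of `v` is a bridge of `u` (as
`u` is both a prefix and a suffix of `v`), while `c` is not one since `v c v` contains
`u (c u)^(k+1)`. Induction on the number of bridges thus puts every word of the language
into a periodic configuration of `X`, and density follows by applying this to the central
windows of a configuration.
-/

section Words

variable {A : Type*}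

def window (x : ℤ → A) (i : ℤ) (n : ℕ) : List A :=
  List.ofFn fun k : Fin n => x (i + k)

@[simp]
lemma length_window (x : ℤ → A) (i : ℤ) (n : ℕ) : (window x i n).length = n :=
  List.length_ofFn

lemma window_add (x : ℤ → A) (i : ℤ) (a b : ℕ) :
    window x i (a + b) = window x i a ++ window x (i + a) b := by
  simp only [window, List.ofFn_add, Fin.val_castLE, Fin.val_natAdd, Nat.cast_add, add_assoc]

lemma window_isPrefix (x : ℤ → A) (i : ℤ) {a b : ℕ} (h : a ≤ b) :
    window x i a <+: window x i b := by
  obtain ⟨d, rfl⟩ := Nat.exists_eq_add_of_le h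
  rw [window_add]
  exact List.prefix_append _ _

lemma window_shiftZ (n : ℤ) (x : ℤ → A) (i : ℤ) (len : ℕ) :
    window (shiftZ n x) i len = window x (i - n) len := by
  simp only [window, shiftZ, sub_add_eq_add_sub]

lemma Function.Periodic.window_add_eq {x : ℤ → A} {p : ℤ} (h : Function.Periodic x p)
    (i : ℤ) (n : ℕ) : window x (i + p) n = window x i n := by
  simp only [window, add_right_comm _ p, h _]

lemma apply_eq_of_window_eq {x y : ℤ → A} {i : ℤ} {n : ℕ} (h : window y i n = window x i n)
    {k : ℕ} (hk : k < n) : y (i + k) = x (i + k) :=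
  congrFun (List.ofFn_inj.1 h) ⟨k, hk⟩

lemma appearsIn_iff_exists_window_eq {w : List A} {x : ℤ → A} :
    AppearsIn w x ↔ ∃ i, window x i w.length = w := by
  conv_rhs => enter [1, i, 2]; rw [← List.ofFn_get w]
  simp only [window, List.ofFn_inj, funext_iff, AppearsIn]

lemma AppearsIn.of_isInfix {w w' : List A} {x : ℤ → A} (h : AppearsIn w x) (hw : w' <:+: w) :
    AppearsIn w' x := by
  obtain ⟨s, t, rfl⟩ := hw
  obtain ⟨i, hi⟩ := appearsIn_iff_exists_window_eq.1 h
  rw [List.length_append, List.length_append, window_add, window_add, List.append_assoc,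
    List.append_assoc] at hi
  have hw' := ((List.append_inj (List.append_inj hi (by simp)).2 (by simp)).1)
  exact appearsIn_iff_exists_window_eq.2 ⟨_, hw'⟩

end Words

section Language

variable {A : Type*} {X : Set (ℤ → A)}

lemma window_mem_lang {x : ℤ → A} (hx : x ∈ X) (i : ℤ) (n : ℕ) : window x i n ∈ lang X :=
  ⟨x, hx, appearsIn_iff_exists_window_eq.2 ⟨i, by simp⟩⟩

lemma mem_lang_of_isInfix {w w' : List A} (h : w ∈ lang X) (hw : w' <:+: w) : w' ∈ lang X :=
  let ⟨x, hx, hwx⟩ := h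
  ⟨x, hx, hwx.of_isInfix hw⟩

lemma exists_window_eq_of_appearsIn (hX : ∀ (n : ℤ) (x : ℤ → A), x ∈ X → shiftZ n x ∈ X)
    {w : List A} {x : ℤ → A} (hx : x ∈ X) (hw : AppearsIn w x) (i : ℤ) :
    ∃ y ∈ X, window y i w.length = w := by
  obtain ⟨j, hj⟩ := appearsIn_iff_exists_window_eq.1 hw
  exact ⟨shiftZ (i - j) x, hX _ _ hx, by rw [window_shiftZ, sub_sub_cancel, hj]⟩

lemma mem_closure_of_forall_window_eq [TopologicalSpace A] {x : ℤ → A}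
    (h : ∀ n : ℕ, ∃ y ∈ X, window y (-n) (2 * n + 1) = window x (-n) (2 * n + 1)) :
    x ∈ closure X := by
  choose y hyX hy using h
  refine mem_closure_of_tendsto (tendsto_pi_nhds.2 fun m => ?_)
    (Filter.Eventually.of_forall (f := Filter.atTop) hyX)
  refine tendsto_const_nhds.congr' ?_
  filter_upwards [Filter.eventually_ge_atTop m.natAbs] with n hn
  have hk : (m + n).toNat < 2 * n + 1 := by omega
  have := apply_eq_of_window_eq (hy n) hk
  rwa [Int.toNat_of_nonneg (by omega), neg_add_cancel_comm_assoc, eq_comm] at this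

lemma mem_of_forall_window_mem_lang [TopologicalSpace A] (hX : IsSubshiftZ X) {x : ℤ → A}
    (h : ∀ i n, window x i n ∈ lang X) : x ∈ X := by
  rw [← hX.1.closure_eq]
  refine mem_closure_of_forall_window_eq fun n => ?_
  obtain ⟨y, hy, hwy⟩ := h (-n) (2 * n + 1)
  simpa using exists_window_eq_of_appearsIn hX.2 hy hwy (-n)

end Language

section Periodic

variable {A : Type*}

lemma shiftZ_shiftZ (a b : ℤ) (x : ℤ → A) : shiftZ a (shiftZ b x) = shiftZ (a + b) x := by
  funext m
  simp only [shiftZ, sub_sub]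

lemma IsPeriodicZ.shiftZ {x : ℤ → A} (h : IsPeriodicZ x) (n : ℤ) : IsPeriodicZ (shiftZ n x) :=
  h.subset <| Set.range_subset_iff.2 fun m => ⟨m + n, (shiftZ_shiftZ m n x).symm⟩

lemma isPeriodicZ_of_periodic {x : ℤ → A} {p : ℤ} (hp : 0 < p) (h : Function.Periodic x p) :
    IsPeriodicZ x := by
  refine ((Set.finite_Ico 0 p).image fun r => shiftZ r x).subset ?_
  rintro _ ⟨n, rfl⟩
  refine ⟨n % p, ⟨Int.emod_nonneg n hp.ne', Int.emod_lt_of_pos n hp⟩, funext fun m => ?_⟩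
  have : m - n % p = m - n + n / p * p := by rw [Int.emod_def]; ring
  simp only [shiftZ, this]
  exact h.int_mul (n / p) (m - n)

lemma window_mem_lang_of_periodic {X : Set (ℤ → A)} {x : ℤ → A} {p : ℤ} (hp : 0 < p)
    (hper : Function.Periodic x p) (h : ∀ n, window x 0 n ∈ lang X) (i : ℤ) (n : ℕ) :
    window x i n ∈ lang X := by
  have hi : i = (i % p).toNat + i / p * p := by
    rw [Int.toNat_of_nonneg (Int.emod_nonneg i hp.ne'), Int.emod_def]; ring
  have hper' : Function.Periodic x (i / p * p) := by simpa using hper.int_mul (i / p)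
  rw [hi, hper'.window_add_eq, ← zero_add ((i % p).toNat : ℤ)]
  refine mem_lang_of_isInfix (h ((i % p).toNat + n)) ?_
  rw [window_add]
  exact List.suffix_append _ _ |>.isInfix

def periodicExtension (P : List A) (hP : P ≠ []) : ℤ → A := fun m =>
  P[(m % P.length).toNat]'(by
    have hlen : (0 : ℤ) < P.length := Int.natCast_pos.2 (List.length_pos_iff.2 hP)
    have := Int.emod_lt_of_pos m hlen
    have := Int.emod_nonneg m hlen.ne'
    omega)

lemma periodic_periodicExtension (P : List A) (hP : P ≠ []) :
    Function.Periodic (periodicExtension P hP) P.length := fun m => by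
  simp only [periodicExtension, ← Int.emod_eq_add_self_emod]

lemma window_periodicExtension_length (P : List A) (hP : P ≠ []) :
    window (periodicExtension P hP) 0 P.length = P := by
  refine List.ext_get (by simp) fun k hk _ => ?_
  simp [window, periodicExtension, Int.emod_eq_of_lt]

lemma window_periodicExtension_mul (P : List A) (hP : P ≠ []) (k : ℕ) :
    window (periodicExtension P hP) 0 (k * P.length) = (List.replicate k P).flatten := by
  induction k with
  | zero => simp [window]
  | succ k ih =>
    rw [Nat.succ_mul, window_add, ih, List.replicate_succ', List.flatten_append,
      List.flatten_singleton, Nat.cast_mul, zero_add, ← zero_add ((k : ℤ) * _),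
      ((periodic_periodicExtension P hP).nat_mul k).window_add_eq,
      window_periodicExtension_length]

lemma periodicExtension_mem [TopologicalSpace A] {X : Set (ℤ → A)} (hX : IsSubshiftZ X)
    (P : List A) (hP : P ≠ []) (h : ∀ k, (List.replicate k P).flatten ∈ lang X) :
    periodicExtension P hP ∈ X := by
  have hlen : 0 < P.length := List.length_pos_iff.2 hP
  refine mem_of_forall_window_mem_lang hX <|
    window_mem_lang_of_periodic (by omega) (periodic_periodicExtension P hP) fun n => ?_
  refine mem_lang_of_isInfix (h n) ?_
  rw [← window_periodicExtension_mul]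
  exact (window_isPrefix _ _ (Nat.le_mul_of_pos_right n hlen)).isInfix

lemma isPeriodicZ_periodicExtension (P : List A) (hP : P ≠ []) :
    IsPeriodicZ (periodicExtension P hP) :=
  isPeriodicZ_of_periodic (by simpa using List.length_pos_iff.2 hP)
    (periodic_periodicExtension P hP)

end Periodic

section Bridges

variable {A : Type*} {X : Set (ℤ → A)} {n : ℕ}

def loopWord (u c : List A) (k : ℕ) : List A :=
  (List.replicate k (u ++ c)).flatten ++ u

lemma loopWord_succ (u c : List A) (k : ℕ) :
    loopWord u c (k + 1) = loopWord u c k ++ c ++ u := by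
  simp [loopWord, List.replicate_succ']

lemma prefix_loopWord (u c : List A) (k : ℕ) : u <+: loopWord u c k := by
  cases k with
  | zero => simp [loopWord]
  | succ k => simp [loopWord, List.replicate_succ, List.append_assoc]

lemma suffix_loopWord (u c : List A) (k : ℕ) : u <:+ loopWord u c k :=
  List.suffix_append _ _

def bridges (X : Set (ℤ → A)) (n : ℕ) (u : List A) : Set (List A) :=
  {c | c.length ≤ n ∧ u ++ c ++ u ∈ lang X}

lemma bridges_finite [Finite A] (X : Set (ℤ → A)) (n : ℕ) (u : List A) :
    (bridges X n u).Finite :=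
  (List.finite_length_le A n).subset fun _ hc => hc.1

lemma bridges_subset_of_isPrefix_of_isSuffix {u v : List A} (hpre : u <+: v) (hsuf : u <:+ v) :
    bridges X n v ⊆ bridges X n u := by
  rintro c ⟨hlen, hc⟩
  obtain ⟨t, rfl⟩ := hpre
  obtain ⟨s, hs⟩ := hsuf
  refine ⟨hlen, mem_lang_of_isInfix hc ⟨s, t, ?_⟩⟩
  nth_rewrite 1 [← hs]
  simp only [List.append_assoc]

lemma exists_bridges_ssubset {u c : List A} (hc : c ∈ bridges X n u)
    (hnot : ¬ ∀ k, loopWord u c k ∈ lang X) :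
    ∃ v ∈ lang X, u <+: v ∧ bridges X n v ⊂ bridges X n u := by
  obtain ⟨k, hk, hk'⟩ : ∃ k, loopWord u c k ∈ lang X ∧ loopWord u c (k + 1) ∉ lang X := by
    by_contra! h
    refine hnot fun k => Nat.rec ?_ (fun k ih => h k ih) k
    exact mem_lang_of_isInfix hc.2 (by simpa [loopWord] using List.infix_append [] u (c ++ u))
  refine ⟨_, hk, prefix_loopWord u c k, (Set.ssubset_iff_of_subset
    (bridges_subset_of_isPrefix_of_isSuffix (prefix_loopWord u c k) (suffix_loopWord u c k))).2
    ⟨c, hc, fun ⟨_, hc'⟩ => hk' (mem_lang_of_isInfix hc' ?_)⟩⟩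
  rw [loopWord_succ]
  exact ((List.prefix_append_right_inj _).2 (prefix_loopWord u c k)).isInfix

lemma exists_loopWord_mem_lang [Finite A] (hW : ∀ u ∈ lang X, (bridges X n u).Nonempty)
    {u : List A} (hu : u ∈ lang X) : ∃ v c, u <+: v ∧ ∀ k, loopWord v c k ∈ lang X := by
  induction hcard : (bridges X n u).ncard using Nat.strong_induction_on generalizing u with
  | _ m ih =>
    obtain ⟨c, hc⟩ := hW u hu
    by_cases hall : ∀ k, loopWord u c k ∈ lang X
    · exact ⟨u, c, List.prefix_rfl, hall⟩
    obtain ⟨v, hv, huv, hss⟩ := exists_bridges_ssubset hc hall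
    obtain ⟨w, d, hvw, hw⟩ := ih _ (hcard ▸ Set.ncard_lt_ncard hss (bridges_finite X n u)) hv rfl
    exact ⟨w, d, huv.trans hvw, hw⟩

lemma IsWSubshift.exists_bridges_nonempty (hW : IsWSubshift X) :
    ∃ n, ∀ u ∈ lang X, (bridges X n u).Nonempty :=
  let ⟨n, h⟩ := hW
  ⟨n, fun u hu => let ⟨c, _, hc, hucu⟩ := h u hu u hu; ⟨c, hc, hucu⟩⟩

end Bridges

lemma exists_periodic_appearsIn {A : Type*} [Finite A] [TopologicalSpace A]
    {X : Set (ℤ → A)} (hX : IsSubshiftZ X) (hW : IsWSubshift X) {w : List A} (hw : w ∈ lang X) :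
    ∃ x ∈ X, IsPeriodicZ x ∧ AppearsIn w x := by
  obtain ⟨n, hn⟩ := hW.exists_bridges_nonempty
  obtain ⟨x, hx, hwx⟩ := hw
  obtain ⟨i, hi⟩ := appearsIn_iff_exists_window_eq.1 hwx
  -- extend `w` by one letter so that the period `v ++ c` below is not empty
  have hwu : w <+: window x i (w.length + 1) := by
    rw [window_add, hi]
    exact List.prefix_append _ _
  obtain ⟨v, c, huv, hv⟩ := exists_loopWord_mem_lang hn (window_mem_lang hx i (w.length + 1))
  have hP : v ++ c ≠ [] := by
    have := huv.length_le
    rw [length_window] at this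
    exact List.ne_nil_of_length_pos (by simp only [List.length_append]; omega)
  refine ⟨periodicExtension (v ++ c) hP,
    periodicExtension_mem hX _ hP fun k => mem_lang_of_isInfix (hv k) (List.infix_append [] _ _),
    isPeriodicZ_periodicExtension _ hP, ?_⟩
  refine AppearsIn.of_isInfix ?_ (hwu.trans (huv.trans (List.prefix_append v c))).isInfix
  exact appearsIn_iff_exists_window_eq.2 ⟨0, window_periodicExtension_length _ hP⟩

theorem dense_periodic_of_W_general
    {A : Type*} [Finite A] [TopologicalSpace A]
    (X : Set (ℤ → A)) (hX : IsSubshiftZ X) (hW : IsWSubshift X) :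
    X ⊆ closure {x ∈ X | IsPeriodicZ x} ∧
      ∀ w ∈ lang X, ∃ x ∈ X, IsPeriodicZ x ∧ AppearsIn w x := by
  refine ⟨fun x hx => mem_closure_of_forall_window_eq fun n => ?_,
    fun w hw => exists_periodic_appearsIn hX hW hw⟩
  obtain ⟨y, hyX, hy, hxy⟩ :=
    exists_periodic_appearsIn hX hW (window_mem_lang hx (-n) (2 * n + 1))
  simpa using exists_window_eq_of_appearsIn (X := {x ∈ X | IsPeriodicZ x})
    (fun m z hz => ⟨hX.2 m z hz.1, hz.2.shiftZ m⟩) ⟨hyX, hy⟩ hxy (-n)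

/-- If `X ⊆ A^ℤ` is a W-subshift, then the periodic configurations of `X` are dense
in `X`; equivalently, every word of the language of `X` appears as a subword of some
periodic configuration belonging to `X`. -/
theorem dense_periodic_of_W
    {A : Type*} [Finite A] [TopologicalSpace A] [DiscreteTopology A]
    (X : Set (ℤ → A)) (hX : IsSubshiftZ X) (hW : IsWSubshift X) :
    X ⊆ closure {x ∈ X | IsPeriodicZ x} ∧
      ∀ w ∈ lang X, ∃ x ∈ X, IsPeriodicZ x ∧ AppearsIn w x :=
  dense_periodic_of_W_general X hX hW
end
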